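/- Let w ∈ A_2 on ℝ with constant [w]_{A_2} = sup_J ⟨w⟩_J ⟨w^{-1}⟩_J (supremum over bounded intervals J). For k ∈ ℤ, let w_k = Σ_{I∈𝒫_k} ⟨w⟩_I χ_I be the averaging of w over the dyadic intervals of length 2^{-k}. Then w_k ∈ A_2 and [w_k]_{A_2} ≤ 9[w]_{A_2}. -/

import Mathlib

open MeasureTheory

/-- The dyadic interval of generation `k` and index `j`: `[j·2^{-k}, (j+1)·2^{-k})`. -/
def dyadicInterval (k : ℤ) (j : ℤ) : Set ℝ :=
  Set.Ico ((j : ℝ) * (2 : ℝ) ^ (-k)) (((j : ℝ) + 1) * (2 : ℝ) ^ (-k))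

/-- The averaging of `w` at scale `2^{-k}`: `w_k = Σ_{I∈𝒫_k} ⟨w⟩_I χ_I`. -/
noncomputable def dyadicAvg (w : ℝ → ℝ) (k : ℤ) (x : ℝ) : ℝ :=
  ((2 : ℝ) ^ (-k))⁻¹ *
    ∫ t in dyadicInterval k ⌊x / (2 : ℝ) ^ (-k)⌋, w t

/-- The average of `f` over the bounded interval `(a, b]`. -/
noncomputable def intervalAvg (f : ℝ → ℝ) (a b : ℝ) : ℝ :=
  (b - a)⁻¹ * ∫ x in Set.Ioc a b, f x

/-!
Write `δ = 2^{-k}`, `J = (a, b]`, and let `K` be the union of the dyadic intervals of length `δ`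
that meet `J`, so `|K| < |J| + 2δ`. For `v ≥ 0` the average of `v_k` over `J` is bounded both by
`|J|⁻¹ ∫_K v_k = |J|⁻¹ ∫_K v` and by `sup_J v_k ≤ δ⁻¹ ∫_K v`; since `|K| ≤ 3 max(|J|, δ)`, this
gives `⟨v_k⟩_J ≤ 3 ⟨v⟩_K`. Cauchy–Schwarz on each dyadic interval gives `(w_k)⁻¹ ≤ (w⁻¹)_k`, so
`⟨w_k⟩_J ⟨w_k⁻¹⟩_J ≤ 9 ⟨w⟩_K ⟨w⁻¹⟩_K ≤ 9 [w]_{A₂}`.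
-/

open Set

namespace MeasureTheory.LocallyIntegrable

variable {E : Type*} [NormedAddCommGroup E] {μ : Measure ℝ} {f : ℝ → E}

lemma integrableOn_Ico (hf : LocallyIntegrable f μ) (a b : ℝ) : IntegrableOn f (Ico a b) μ :=
  (hf.integrableOn_isCompact isCompact_Icc).mono_set Ico_subset_Icc_self

lemma integrableOn_Ioc (hf : LocallyIntegrable f μ) (a b : ℝ) : IntegrableOn f (Ioc a b) μ :=
  (hf.integrableOn_isCompact isCompact_Icc).mono_set Ioc_subset_Icc_self

end MeasureTheory.LocallyIntegrable

lemma sq_measureReal_le_setIntegral_mul_setIntegral_inv {α : Type*} [MeasurableSpace α]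
    {μ : Measure α} {s : Set α} {f : α → ℝ} (hs : MeasurableSet s) (hμs : μ s ≠ ⊤)
    (hf_pos : ∀ x ∈ s, 0 < f x) (hf : IntegrableOn f s μ)
    (hf_inv : IntegrableOn (fun x => (f x)⁻¹) s μ) :
    μ.real s ^ 2 ≤ (∫ x in s, f x ∂μ) * ∫ x in s, (f x)⁻¹ ∂μ := by
  have hquad : ∀ t : ℝ,
      0 ≤ (∫ x in s, f x ∂μ) * (t * t) + (-2 * μ.real s) * t + ∫ x in s, (f x)⁻¹ ∂μ := by
    intro t
    have hsq : ∀ x ∈ s, t * t * f x - 2 * t + (f x)⁻¹ = (t * f x - 1) ^ 2 / f x := by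
      intro x hx
      have := (hf_pos x hx).ne'
      field_simp
      ring
    have hexpand : ∫ x in s, (t * t * f x - 2 * t + (f x)⁻¹) ∂μ
        = (∫ x in s, f x ∂μ) * (t * t) + (-2 * μ.real s) * t + ∫ x in s, (f x)⁻¹ ∂μ := by
      have hlin : IntegrableOn (fun x => t * t * f x - 2 * t) s μ :=
        (hf.const_mul _).sub (integrableOn_const hμs)
      rw [integral_add hlin hf_inv, integral_sub (hf.const_mul _) (integrableOn_const hμs),
        integral_const_mul, setIntegral_const, smul_eq_mul]
      ring
    rw [← hexpand, setIntegral_congr_fun hs hsq]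
    exact setIntegral_nonneg hs fun x hx => div_nonneg (sq_nonneg _) (hf_pos x hx).le
  have := discrim_le_zero hquad
  rw [discrim] at this
  nlinarith

lemma intervalAvg_nonneg {f : ℝ → ℝ} (hf : ∀ x, 0 ≤ f x) {a b : ℝ} (hab : a ≤ b) :
    0 ≤ intervalAvg f a b :=
  mul_nonneg (inv_nonneg.2 (sub_nonneg.2 hab))
    (setIntegral_nonneg measurableSet_Ioc fun x _ => hf x)

lemma intervalAvg_mono {f g : ℝ → ℝ} (hf : ∀ x, 0 ≤ f x) {a b : ℝ}
    (hg : IntegrableOn g (Ioc a b)) (hfg : ∀ x, f x ≤ g x) (hab : a ≤ b) :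
    intervalAvg f a b ≤ intervalAvg g a b :=
  mul_le_mul_of_nonneg_left (integral_mono_of_nonneg (ae_of_all _ hf) hg (ae_of_all _ hfg))
    (inv_nonneg.2 (sub_nonneg.2 hab))

lemma mem_dyadicInterval_iff {k j : ℤ} {x : ℝ} :
    x ∈ dyadicInterval k j ↔ ⌊x / (2 : ℝ) ^ (-k)⌋ = j := by
  have hδ : (0 : ℝ) < 2 ^ (-k) := by positivity
  rw [Int.floor_eq_iff, dyadicInterval, mem_Ico, le_div_iff₀ hδ, div_lt_iff₀ hδ]

lemma mem_dyadicInterval_floor (k : ℤ) (x : ℝ) :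
    x ∈ dyadicInterval k ⌊x / (2 : ℝ) ^ (-k)⌋ :=
  mem_dyadicInterval_iff.2 rfl

lemma dyadicInterval_subset_Ico {k j m n : ℤ} (hm : m ≤ j) (hn : j ≤ n) :
    dyadicInterval k j ⊆ Ico (m * (2 : ℝ) ^ (-k)) ((n + 1) * (2 : ℝ) ^ (-k)) := by
  have hδ : (0 : ℝ) < 2 ^ (-k) := by positivity
  apply Ico_subset_Ico <;> gcongr

lemma measurableSet_dyadicInterval (k j : ℤ) : MeasurableSet (dyadicInterval k j) :=
  measurableSet_Ico

lemma volume_real_dyadicInterval (k j : ℤ) :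
    volume.real (dyadicInterval k j) = (2 : ℝ) ^ (-k) := by
  have hδ : (0 : ℝ) < 2 ^ (-k) := by positivity
  rw [dyadicInterval, Real.volume_real_Ico_of_le (by linarith)]
  ring

lemma Ico_union_dyadicInterval {k m n : ℤ} (hmn : m ≤ n) :
    Ico (m * (2 : ℝ) ^ (-k)) (n * (2 : ℝ) ^ (-k)) ∪ dyadicInterval k n
      = Ico (m * (2 : ℝ) ^ (-k)) (((n + 1 : ℤ) : ℝ) * (2 : ℝ) ^ (-k)) := by
  have hδ : (0 : ℝ) < 2 ^ (-k) := by positivity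
  rw [Int.cast_add, Int.cast_one, dyadicInterval]
  exact Ico_union_Ico_eq_Ico (by gcongr) (by gcongr; linarith)

lemma dyadicAvg_of_mem {v : ℝ → ℝ} {k j : ℤ} {x : ℝ} (hx : x ∈ dyadicInterval k j) :
    dyadicAvg v k x = ((2 : ℝ) ^ (-k))⁻¹ * ∫ t in dyadicInterval k j, v t := by
  rw [dyadicAvg, mem_dyadicInterval_iff.1 hx]

lemma dyadicAvg_nonneg {v : ℝ → ℝ} (hv : ∀ x, 0 ≤ v x) (k : ℤ) (x : ℝ) :
    0 ≤ dyadicAvg v k x :=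
  mul_nonneg (by positivity) (setIntegral_nonneg measurableSet_Ico fun t _ => hv t)

lemma dyadicAvg_le_of_dyadicInterval_subset {v : ℝ → ℝ} (hv : ∀ x, 0 ≤ v x) {s : Set ℝ}
    (hvs : IntegrableOn v s) {k : ℤ} {x : ℝ}
    (hs : dyadicInterval k ⌊x / (2 : ℝ) ^ (-k)⌋ ⊆ s) :
    dyadicAvg v k x ≤ ((2 : ℝ) ^ (-k))⁻¹ * ∫ t in s, v t :=
  mul_le_mul_of_nonneg_left (setIntegral_mono_set hvs (ae_of_all _ hv) hs.eventuallyLE)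
    (by positivity)

lemma integrableOn_dyadicAvg_dyadicInterval (v : ℝ → ℝ) (k j : ℤ) :
    IntegrableOn (dyadicAvg v k) (dyadicInterval k j) :=
  (integrableOn_const (by simp [dyadicInterval])).congr_fun
    (fun _ hx => (dyadicAvg_of_mem hx).symm) measurableSet_Ico

lemma setIntegral_dyadicAvg_dyadicInterval (v : ℝ → ℝ) (k j : ℤ) :
    ∫ x in dyadicInterval k j, dyadicAvg v k x = ∫ x in dyadicInterval k j, v x := by
  rw [setIntegral_congr_fun (measurableSet_dyadicInterval k j) fun _ hx => dyadicAvg_of_mem hx,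
    setIntegral_const, volume_real_dyadicInterval, smul_eq_mul,
    mul_inv_cancel_left₀ (by positivity)]

lemma integrableOn_dyadicAvg_Ico {v : ℝ → ℝ} (k : ℤ) {m n : ℤ} (hmn : m ≤ n) :
    IntegrableOn (dyadicAvg v k) (Ico (m * (2 : ℝ) ^ (-k)) (n * (2 : ℝ) ^ (-k))) := by
  induction n, hmn using Int.leInduction with
  | base => simp
  | succ n hmn ih =>
    rw [← Ico_union_dyadicInterval hmn]
    exact ih.union (integrableOn_dyadicAvg_dyadicInterval v k n)

lemma locallyIntegrable_dyadicAvg (v : ℝ → ℝ) (k : ℤ) :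
    LocallyIntegrable (dyadicAvg v k) volume := by
  refine locallyIntegrable_iff.2 fun s hs => ?_
  obtain ⟨c, hc⟩ := hs.bddBelow
  obtain ⟨d, hd⟩ := hs.bddAbove
  set m := ⌊c / (2 : ℝ) ^ (-k)⌋
  set n' := ⌊d / (2 : ℝ) ^ (-k)⌋ + 1
  refine (integrableOn_dyadicAvg_Ico k (le_max_left m n')).mono_set fun x hx => ⟨?_, ?_⟩
  · exact (mem_dyadicInterval_floor k c).1.trans (hc hx)
  · calc x ≤ d := hd hx
      _ < n' * 2 ^ (-k) := by simpa [n'] using (mem_dyadicInterval_floor k d).2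
      _ ≤ (max m n' : ℤ) * 2 ^ (-k) := by gcongr; exact_mod_cast le_max_right m n'

lemma setIntegral_dyadicAvg_Ico {v : ℝ → ℝ} (hv : LocallyIntegrable v volume) (k : ℤ)
    {m n : ℤ} (hmn : m ≤ n) :
    ∫ x in Ico (m * (2 : ℝ) ^ (-k)) (n * (2 : ℝ) ^ (-k)), dyadicAvg v k x
      = ∫ x in Ico (m * (2 : ℝ) ^ (-k)) (n * (2 : ℝ) ^ (-k)), v x := by
  induction n, hmn using Int.leInduction with
  | base => simp
  | succ n hmn ih =>
    have hdisj : Disjoint (Ico (m * (2 : ℝ) ^ (-k)) (n * (2 : ℝ) ^ (-k))) (dyadicInterval k n) :=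
      Ico_disjoint_Ico_same
    rw [← Ico_union_dyadicInterval hmn,
      setIntegral_union hdisj measurableSet_Ico
        ((locallyIntegrable_dyadicAvg v k).integrableOn_Ico _ _)
        (integrableOn_dyadicAvg_dyadicInterval v k n),
      setIntegral_union hdisj measurableSet_Ico (hv.integrableOn_Ico _ _) (hv.integrableOn_Ico _ _),
      ih, setIntegral_dyadicAvg_dyadicInterval]

lemma inv_dyadicAvg_le_dyadicAvg_inv {w : ℝ → ℝ} (hw_pos : ∀ x, 0 < w x)
    (hw : LocallyIntegrable w volume) (hw_inv : LocallyIntegrable (fun x => (w x)⁻¹) volume)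
    (k : ℤ) (x : ℝ) : (dyadicAvg w k x)⁻¹ ≤ dyadicAvg (fun t => (w t)⁻¹) k x := by
  set δ : ℝ := 2 ^ (-k)
  set I := dyadicInterval k ⌊x / δ⌋
  have hδ : 0 < δ := by positivity
  have hCS := sq_measureReal_le_setIntegral_mul_setIntegral_inv (μ := volume) (s := I)
    (measurableSet_dyadicInterval _ _) measure_Ico_lt_top.ne (fun t _ => hw_pos t)
    (hw.integrableOn_Ico _ _) (hw_inv.integrableOn_Ico _ _)
  rw [volume_real_dyadicInterval] at hCS
  have hT : 0 ≤ ∫ t in I, (w t)⁻¹ :=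
    setIntegral_nonneg (measurableSet_dyadicInterval _ _) fun t _ => (inv_pos.2 (hw_pos t)).le
  have hS : 0 < ∫ t in I, w t := by
    refine (setIntegral_nonneg (measurableSet_dyadicInterval _ _)
      fun t _ => (hw_pos t).le).lt_of_ne ?_
    intro h0
    rw [← h0, zero_mul] at hCS
    nlinarith
  rw [dyadicAvg, dyadicAvg, mul_inv, inv_inv]
  calc δ * (∫ t in I, w t)⁻¹ = δ⁻¹ * (δ ^ 2 / ∫ t in I, w t) := by field_simp
    _ ≤ δ⁻¹ * ∫ t in I, (w t)⁻¹ := by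
      gcongr
      rwa [div_le_iff₀ hS, mul_comm]

lemma intervalAvg_dyadicAvg_le {v : ℝ → ℝ} (hv0 : ∀ x, 0 ≤ v x)
    (hv : LocallyIntegrable v volume) (k : ℤ) {a b : ℝ} (hab : a < b) :
    intervalAvg (dyadicAvg v k) a b ≤
      3 * intervalAvg v (⌊a / (2 : ℝ) ^ (-k)⌋ * (2 : ℝ) ^ (-k))
        ((⌊b / (2 : ℝ) ^ (-k)⌋ + 1) * (2 : ℝ) ^ (-k)) := by
  set δ : ℝ := 2 ^ (-k)
  have hδ : 0 < δ := by positivity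
  set m := ⌊a / δ⌋
  set n := ⌊b / δ⌋
  obtain ⟨hma, ham⟩ := mem_dyadicInterval_floor k a
  obtain ⟨hnb, hbn⟩ := mem_dyadicInterval_floor k b
  have hfloor_mono : Monotone fun x : ℝ => ⌊x / δ⌋ := fun x y hxy => Int.floor_mono (by gcongr)
  have hmn : m ≤ n + 1 := (hfloor_mono hab.le).trans (Int.le_add_one le_rfl)
  set K := Ico (m * δ) ((n + 1) * δ)
  have hJK : Ioc a b ⊆ K := fun x hx => ⟨hma.trans hx.1.le, hx.2.trans_lt hbn⟩
  have hpieces : ∀ x ∈ Ioc a b, dyadicInterval k ⌊x / δ⌋ ⊆ K := fun x hx =>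
    dyadicInterval_subset_Ico (hfloor_mono hx.1.le) (hfloor_mono hx.2)
  have hint : IntegrableOn (dyadicAvg v k) K :=
    (locallyIntegrable_dyadicAvg v k).integrableOn_Ico _ _
  set S := ∫ x in K, v x
  have hS0 : 0 ≤ S := setIntegral_nonneg measurableSet_Ico fun x _ => hv0 x
  have h_mass : ∫ x in Ioc a b, dyadicAvg v k x ≤ S := by
    have hS : ∫ x in K, dyadicAvg v k x = S := by
      have := setIntegral_dyadicAvg_Ico hv k hmn
      rwa [Int.cast_add, Int.cast_one] at this
    exact hS ▸ setIntegral_mono_set hint (ae_of_all _ (dyadicAvg_nonneg hv0 k)) hJK.eventuallyLE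
  have h_sup : ∫ x in Ioc a b, dyadicAvg v k x ≤ (b - a) * (δ⁻¹ * S) := by
    have := setIntegral_mono_on (hint.mono_set hJK) (integrableOn_const measure_Ioc_lt_top.ne)
      measurableSet_Ioc fun x hx =>
        dyadicAvg_le_of_dyadicInterval_subset hv0 (hv.integrableOn_Ico _ _) (hpieces x hx)
    rwa [setIntegral_const, Real.volume_real_Ioc_of_le hab.le, smul_eq_mul] at this
  set L := (n + 1) * δ - m * δ
  have hL : L < (b - a) + 2 * δ := by linarith
  have hL0 : 0 < L := by linarith
  have hS_Ioc : ∫ x in Ioc (m * δ) ((n + 1) * δ), v x = S := by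
    rw [integral_Ioc_eq_integral_Ioo, ← integral_Ico_eq_integral_Ioo]
  rw [intervalAvg, intervalAvg, hS_Ioc, inv_mul_le_iff₀ (sub_pos.2 hab),
    show (b - a) * (3 * (L⁻¹ * S)) = 3 * (b - a) * S / L by ring, le_div_iff₀ hL0]
  rcases le_or_gt δ (b - a) with hlong | hshort
  · calc (∫ x in Ioc a b, dyadicAvg v k x) * L ≤ S * L := by gcongr
      _ ≤ S * (3 * (b - a)) := by gcongr; linarith
      _ = 3 * (b - a) * S := by ring
  · calc (∫ x in Ioc a b, dyadicAvg v k x) * L ≤ (b - a) * (δ⁻¹ * S) * L := by gcongr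
      _ ≤ (b - a) * (δ⁻¹ * S) * (3 * δ) := by gcongr; linarith
      _ = 3 * (b - a) * S := by field_simp

/-- if `w ∈ A₂` with `[w]_{A₂} ≤ W` (over all bounded intervals), then the
dyadic averaging `w_k` of `w` at scale `2^{-k}` is in `A₂` with `[w_k]_{A₂} ≤ 9W`. -/
theorem dyadicAvg_A2
    (w : ℝ → ℝ) (hw_pos : ∀ x, 0 < w x) (hw_loc : LocallyIntegrable w volume)
    (hwinv_loc : LocallyIntegrable (fun x => (w x)⁻¹) volume)
    (W : ℝ)
    (hA2 : ∀ a b : ℝ, a < b →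
      intervalAvg w a b * intervalAvg (fun x => (w x)⁻¹) a b ≤ W)
    (k : ℤ) :
    ∀ a b : ℝ, a < b →
      intervalAvg (dyadicAvg w k) a b *
        intervalAvg (fun x => (dyadicAvg w k x)⁻¹) a b ≤ 9 * W := by
  intro a b hab
  set c := ⌊a / (2 : ℝ) ^ (-k)⌋ * (2 : ℝ) ^ (-k)
  set d := (⌊b / (2 : ℝ) ^ (-k)⌋ + 1) * (2 : ℝ) ^ (-k)
  have hcd : c < d := by
    linarith [(mem_dyadicInterval_floor k a).1, (mem_dyadicInterval_floor k b).2]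
  have hw0 : ∀ x, 0 ≤ w x := fun x => (hw_pos x).le
  have hwk_inv0 : ∀ x, 0 ≤ (dyadicAvg w k x)⁻¹ := fun x => inv_nonneg.2 (dyadicAvg_nonneg hw0 k x)
  have hw_bound : intervalAvg (dyadicAvg w k) a b ≤ 3 * intervalAvg w c d :=
    intervalAvg_dyadicAvg_le hw0 hw_loc k hab
  have hwinv_bound : intervalAvg (fun x => (dyadicAvg w k x)⁻¹) a b
      ≤ 3 * intervalAvg (fun x => (w x)⁻¹) c d :=
    (intervalAvg_mono hwk_inv0 ((locallyIntegrable_dyadicAvg _ k).integrableOn_Ioc a b)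
      (inv_dyadicAvg_le_dyadicAvg_inv hw_pos hw_loc hwinv_loc k) hab.le).trans
    (intervalAvg_dyadicAvg_le (fun x => (inv_pos.2 (hw_pos x)).le) hwinv_loc k hab)
  calc intervalAvg (dyadicAvg w k) a b * intervalAvg (fun x => (dyadicAvg w k x)⁻¹) a b
      ≤ (3 * intervalAvg w c d) * (3 * intervalAvg (fun x => (w x)⁻¹) c d) :=
        mul_le_mul hw_bound hwinv_bound (intervalAvg_nonneg hwk_inv0 hab.le)
          (mul_nonneg zero_le_three (intervalAvg_nonneg hw0 hcd.le))
    _ = 9 * (intervalAvg w c d * intervalAvg (fun x => (w x)⁻¹) c d) := by ring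
    _ ≤ 9 * W := by gcongr; exact hA2 c d hcd
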